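/- arXiv:1606.03872 — 2 statements merged into one kernel-verified Lean document; each statement's English description precedes it below -/
import Mathlib

section
/- For every odd integer n ≥ 3, the edge set of K_n can be partitioned into (n−1)/2 Hamiltonian cycles. -/
/-!
Walecki's construction. Write `n = 2k + 1` and take as vertices a point `∞` (here `none`)
together with `ZMod (2k)`. The zigzag `0, 1, -1, 2, -2, …, k` enumerates `ZMod (2k)`, and the sums
of consecutive terms alternate between `1` and `0`. Hence for each `c < k` the closed walk
`∞, c, c + 1, c - 1, …, c + k, ∞` is a Hamiltonian cycle whose edges are exactly `{∞, c}`,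
`{∞, c + k}` and the pairs `{a, b}` with `a + b ∈ {2c, 2c + 1}`. Every vertex of `ZMod (2k)` is `c`
or `c + k`, and every sum is `2c` or `2c + 1`, for exactly one `c < k`: so each edge of `K_n` lies
in exactly one of these `k` cycles.
-/

open SimpleGraph

/-- `H` is a Hamiltonian cycle subgraph: it is spanning, and for some cyclic ordering of all
the vertices its edges are exactly the (cyclically) consecutive pairs. -/
def IsHamiltonianCycleSubgraph {n : ℕ} (H : (⊤ : SimpleGraph (Fin n)).Subgraph) : Prop :=
  H.verts = Set.univ ∧ ∃ f : ZMod n ≃ Fin n, ∀ u v, H.Adj u v ↔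
    ∃ i : ZMod n, (f i = u ∧ f (i + 1) = v) ∨ (f i = v ∧ f (i + 1) = u)

open Function

section CyclicEdges

variable {α β : Type*} {n : ℕ}

def cyclicEdges (f : ZMod n → α) : Set (Sym2 α) :=
  Set.range fun i => s(f i, f (i + 1))

theorem mem_cyclicEdges_comp {g : α → β} (hg : Injective g) (f : ZMod n → α) (x y : α) :
    s(g x, g y) ∈ cyclicEdges (g ∘ f) ↔ s(x, y) ∈ cyclicEdges f := by
  simp only [cyclicEdges, Set.mem_range, comp_apply]
  refine exists_congr fun i => ?_
  rw [← Sym2.map_mk g, ← Sym2.map_mk g, (Sym2.map.injective hg).eq_iff]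

theorem mem_cyclicEdges_val_iff (g : ℕ → α) (e : Sym2 α) :
    e ∈ cyclicEdges (fun j : ZMod (n + 1) => g j.val) ↔
      (∃ t < n, s(g t, g (t + 1)) = e) ∨ s(g n, g 0) = e := by
  constructor
  · rintro ⟨j, rfl⟩
    dsimp only
    have hj : j = (j.val : ZMod (n + 1)) := (ZMod.natCast_zmod_val j).symm
    have hsucc : (j + 1).val = (j.val + 1) % (n + 1) := by
      rw [hj, ← Nat.cast_succ, ZMod.val_natCast, ZMod.val_natCast, Nat.mod_eq_of_lt j.val_lt]
    rw [hsucc]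
    rcases Nat.lt_succ_iff_lt_or_eq.mp j.val_lt with hlt | heq
    · exact Or.inl ⟨j.val, hlt, by rw [Nat.mod_eq_of_lt (by omega)]⟩
    · exact Or.inr (by rw [heq, Nat.mod_self])
  · rintro (⟨t, ht, rfl⟩ | rfl)
    · refine ⟨t, ?_⟩
      simp only [← Nat.cast_succ, ZMod.val_cast_of_lt (by omega : t < n + 1),
        ZMod.val_cast_of_lt (by omega : t + 1 < n + 1)]
    · refine ⟨n, ?_⟩
      simp only [ZMod.natCast_self', ZMod.val_zero, ZMod.val_cast_of_lt (Nat.lt_succ_self n)]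

end CyclicEdges

def cycleSubgraph {n : ℕ} [Fact (1 < n)] (f : ZMod n ≃ Fin n) :
    (⊤ : SimpleGraph (Fin n)).Subgraph where
  verts := Set.univ
  Adj u v := s(u, v) ∈ cyclicEdges f
  adj_sub := by
    rintro u v ⟨i, hi⟩ rfl
    obtain ⟨h0, h1⟩ : f i = u ∧ f (i + 1) = u := by simpa using hi
    simpa using f.injective (h0.trans h1.symm)
  edge_vert _ := Set.mem_univ _
  symm := ⟨fun u v h => by rwa [Sym2.eq_swap]⟩

theorem isHamiltonianCycleSubgraph_cycleSubgraph {n : ℕ} [Fact (1 < n)] (f : ZMod n ≃ Fin n) :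
    IsHamiltonianCycleSubgraph (cycleSubgraph f) :=
  ⟨rfl, f, fun _ _ => exists_congr fun _ => Sym2.eq_iff⟩

theorem edgeSet_cycleSubgraph {n : ℕ} [Fact (1 < n)] (f : ZMod n ≃ Fin n) :
    (cycleSubgraph f).edgeSet = cyclicEdges f := by
  ext e
  induction e using Sym2.ind
  rfl

section Zigzag

variable {R : Type*} [AddCommGroupWithOne R]

/-- The sequence `0, 1, -1, 2, -2, 3, …`. -/
def zigzag (s : ℕ) : R :=
  if Even s then -((s / 2 : ℕ) : R) else ((s / 2 + 1 : ℕ) : R)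

theorem zigzag_two_mul (d : ℕ) : (zigzag (2 * d) : R) = -d := by
  simp [zigzag]

theorem zigzag_two_mul_add_one (d : ℕ) : (zigzag (2 * d + 1) : R) = d + 1 := by
  simp [zigzag, show (2 * d + 1) / 2 = d by omega]

theorem zigzag_add_zigzag_succ (s : ℕ) :
    (zigzag s + zigzag (s + 1) : R) = 1 ∨ (zigzag s + zigzag (s + 1) : R) = 0 := by
  obtain ⟨d, rfl | rfl⟩ := Nat.even_or_odd' s
  · left
    rw [zigzag_two_mul, zigzag_two_mul_add_one]
    abel
  · right
    rw [zigzag_two_mul_add_one, show 2 * d + 1 + 1 = 2 * (d + 1) by ring, zigzag_two_mul]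
    push_cast
    abel

end Zigzag

namespace ZMod

theorem natCast_eq_natCast_iff_of_lt {a b n : ℕ} (ha : a < n) (hb : b < n) :
    (a : ZMod n) = b ↔ a = b := by
  rw [natCast_eq_natCast_iff', Nat.mod_eq_of_lt ha, Nat.mod_eq_of_lt hb]

theorem two_mul_natCast_self (k : ℕ) : (2 * k : ZMod (2 * k)) = 0 := by
  exact_mod_cast natCast_self (2 * k)

variable {k : ℕ} [NeZero k]

theorem existsUnique_eq_or_eq_add (v : ZMod (2 * k)) :
    ∃! i : Fin k, v = (i : ℕ) ∨ v = (i : ℕ) + k := by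
  obtain ⟨r, hr, rfl⟩ : ∃ r < 2 * k, v = r := ⟨v.val, v.val_lt, (natCast_zmod_val v).symm⟩
  have key : ∀ i < k, ((r : ZMod (2 * k)) = i ∨ (r : ZMod (2 * k)) = i + k) ↔ r = i ∨ r = i + k :=
    fun i hi => by
      rw [← Nat.cast_add, natCast_eq_natCast_iff_of_lt hr (by omega),
        natCast_eq_natCast_iff_of_lt hr (by omega)]
  obtain ⟨i, hi, hri⟩ : ∃ i < k, r = i ∨ r = i + k := by
    by_cases h : r < k
    · exact ⟨r, h, Or.inl rfl⟩
    · exact ⟨r - k, by omega, Or.inr (by omega)⟩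
  refine ⟨⟨i, hi⟩, (key i hi).2 hri, fun j hj => Fin.ext ?_⟩
  have := (key j j.2).1 hj
  dsimp only
  omega

theorem existsUnique_eq_two_mul_or_eq_two_mul_add_one (v : ZMod (2 * k)) :
    ∃! i : Fin k, v = 2 * (i : ℕ) ∨ v = 2 * (i : ℕ) + 1 := by
  obtain ⟨r, hr, rfl⟩ : ∃ r < 2 * k, v = r := ⟨v.val, v.val_lt, (natCast_zmod_val v).symm⟩
  have key : ∀ i < k,
      ((r : ZMod (2 * k)) = 2 * i ∨ (r : ZMod (2 * k)) = 2 * i + 1) ↔ r = 2 * i ∨ r = 2 * i + 1 :=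
    fun i hi => by
      rw [← natCast_eq_natCast_iff_of_lt hr (by omega : 2 * i < 2 * k),
        ← natCast_eq_natCast_iff_of_lt hr (by omega : 2 * i + 1 < 2 * k)]
      push_cast
      rfl
  refine ⟨⟨r / 2, by omega⟩, (key (r / 2) (by omega)).2 (by omega), fun j hj => Fin.ext ?_⟩
  have := (key j j.2).1 hj
  dsimp only
  omega

end ZMod

section ZigzagZMod

variable {k : ℕ}

theorem zigzag_injOn : Set.InjOn (zigzag : ℕ → ZMod (2 * k)) (Set.Iio (2 * k)) := by
  intro s hs t ht h
  rw [Set.mem_Iio] at hs ht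
  obtain ⟨a, rfl | rfl⟩ := Nat.even_or_odd' s <;> obtain ⟨b, rfl | rfl⟩ := Nat.even_or_odd' t <;>
    simp only [zigzag_two_mul, zigzag_two_mul_add_one, neg_inj, add_left_inj,
      ZMod.natCast_eq_natCast_iff_of_lt (by omega : a < 2 * k) (by omega : b < 2 * k)] at h
  · omega
  · have : ((a + b + 1 : ℕ) : ZMod (2 * k)) = 0 := by push_cast; linear_combination -h
    have := Nat.le_of_dvd (by omega) ((ZMod.natCast_eq_zero_iff _ _).1 this)
    omega
  · have : ((a + b + 1 : ℕ) : ZMod (2 * k)) = 0 := by push_cast; linear_combination h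
    have := Nat.le_of_dvd (by omega) ((ZMod.natCast_eq_zero_iff _ _).1 this)
    omega
  · omega

variable [NeZero k]

theorem exists_zigzag_eq (a : ZMod (2 * k)) : ∃ s < 2 * k, zigzag s = a := by
  have hinj : Injective fun s : Fin (2 * k) => (zigzag s : ZMod (2 * k)) :=
    fun s t h => Fin.ext (zigzag_injOn s.2 t.2 h)
  obtain ⟨s, hs⟩ := ((Fintype.bijective_iff_injective_and_card _).2 ⟨hinj, by simp⟩).2 a
  exact ⟨s, s.2, hs⟩

theorem exists_zigzag_edge {a b : ZMod (2 * k)} (hab : a ≠ b) (h : a + b = 0 ∨ a + b = 1) :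
    ∃ s, s + 1 < 2 * k ∧ s(zigzag s, zigzag (s + 1)) = s(a, b) := by
  -- `b` is the neighbour of `a` in the zigzag whose sum with `a` is `a + b`; the two cases with
  -- no such neighbour (at either end of the zigzag) are exactly those where `b = a`.
  obtain ⟨s, hs, rfl⟩ := exists_zigzag_eq a
  obtain ⟨d, rfl | rfl⟩ := Nat.even_or_odd' s
  · rw [zigzag_two_mul] at hab h
    rcases h with h | h
    · obtain _ | e := d
      · simp only [Nat.cast_zero, neg_zero, zero_add] at h hab
        exact absurd h.symm hab
      · refine ⟨2 * e + 1, by omega, ?_⟩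
        rw [show 2 * e + 1 + 1 = 2 * (e + 1) by ring, Sym2.eq_swap, zigzag_two_mul_add_one]
        congr 2
        push_cast at h
        linear_combination -h
    · refine ⟨2 * d, by omega, ?_⟩
      rw [zigzag_two_mul, zigzag_two_mul_add_one]
      congr 2
      linear_combination -h
  · rw [zigzag_two_mul_add_one] at hab h
    rcases h with h | h
    · have hd : d + 1 < k := by
        refine lt_of_le_of_ne (by omega) fun hdk => hab ?_
        have : ((d + 1 : ℕ) : ZMod (2 * k)) = k := congrArg _ hdk
        push_cast at this
        linear_combination 2 * this - h + ZMod.two_mul_natCast_self k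
      refine ⟨2 * d + 1, by omega, ?_⟩
      rw [show 2 * d + 1 + 1 = 2 * (d + 1) by ring, zigzag_two_mul, zigzag_two_mul_add_one]
      congr 2
      push_cast
      linear_combination -h
    · refine ⟨2 * d, by omega, ?_⟩
      rw [Sym2.eq_swap, zigzag_two_mul, zigzag_two_mul_add_one]
      congr 2
      linear_combination -h

end ZigzagZMod

section Walecki

variable (k : ℕ)

def waleckiPath (c : ZMod (2 * k)) : ℕ → Option (ZMod (2 * k))
  | 0 => none
  | s + 1 => some (c + zigzag s)

def waleckiCycle (c : ZMod (2 * k)) (j : ZMod (2 * k + 1)) : Option (ZMod (2 * k)) :=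
  waleckiPath k c j.val

theorem waleckiCycle_injective (c : ZMod (2 * k)) : Injective (waleckiCycle k c) := by
  intro i j h
  apply ZMod.val_injective
  have hi := i.val_lt
  have hj := j.val_lt
  simp only [waleckiCycle] at h
  rcases hi' : i.val with _ | s <;> rcases hj' : j.val with _ | t <;>
    simp only [hi', hj', waleckiPath, reduceCtorEq, Option.some.injEq, add_right_inj] at h
  · rfl
  · rw [zigzag_injOn (show s < 2 * k by omega) (show t < 2 * k by omega) h]

theorem waleckiPath_two_mul [NeZero k] (c : ZMod (2 * k)) :
    waleckiPath k c (2 * k) = some (c + k) := by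
  obtain ⟨l, hl⟩ := Nat.exists_eq_succ_of_ne_zero (NeZero.ne k)
  rw [congrArg (waleckiPath k c) (show 2 * k = 2 * l + 1 + 1 by omega), waleckiPath,
    zigzag_two_mul_add_one]
  exact_mod_cast congrArg (fun m : ℕ => some (c + m)) hl.symm

noncomputable def waleckiCycleEquiv [NeZero k] (c : ZMod (2 * k)) :
    ZMod (2 * k + 1) ≃ Option (ZMod (2 * k)) :=
  Equiv.ofBijective _ <|
    (Fintype.bijective_iff_injective_and_card _).2 ⟨waleckiCycle_injective k c, by simp⟩

def IsWaleckiEdge (c : ZMod (2 * k)) : Option (ZMod (2 * k)) → Option (ZMod (2 * k)) → Prop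
  | none, none => False
  | none, some b | some b, none => b = c ∨ b = c + k
  | some a, some b => a + b = 2 * c ∨ a + b = 2 * c + 1

variable {k}

theorem IsWaleckiEdge.symm {c : ZMod (2 * k)} {x y : Option (ZMod (2 * k))}
    (h : IsWaleckiEdge k c x y) : IsWaleckiEdge k c y x := by
  cases x <;> cases y <;> simp only [IsWaleckiEdge, add_comm] at h ⊢ <;> exact h

theorem IsWaleckiEdge.of_sym2_eq {c : ZMod (2 * k)} {x y x' y' : Option (ZMod (2 * k))}
    (he : s(x, y) = s(x', y')) (h : IsWaleckiEdge k c x y) : IsWaleckiEdge k c x' y' := by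
  rcases Sym2.eq_iff.1 he with ⟨rfl, rfl⟩ | ⟨rfl, rfl⟩
  exacts [h, h.symm]

variable [NeZero k]

theorem mem_cyclicEdges_waleckiCycle_iff (c : ZMod (2 * k)) {x y : Option (ZMod (2 * k))}
    (hxy : x ≠ y) : s(x, y) ∈ cyclicEdges (waleckiCycle k c) ↔ IsWaleckiEdge k c x y := by
  rw [show waleckiCycle k c = fun j => waleckiPath k c j.val from rfl, mem_cyclicEdges_val_iff,
    waleckiPath_two_mul]
  constructor
  · rintro (⟨_ | s, -, he⟩ | he)
    · exact IsWaleckiEdge.of_sym2_eq he (Or.inl (by simp [zigzag]))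
    · refine IsWaleckiEdge.of_sym2_eq he ?_
      rcases zigzag_add_zigzag_succ (R := ZMod (2 * k)) s with h | h
      · exact Or.inr (by linear_combination h)
      · exact Or.inl (by linear_combination h)
    · exact IsWaleckiEdge.of_sym2_eq he (Or.inr rfl)
  · intro h
    rcases x with _ | a <;> rcases y with _ | b
    · exact absurd rfl hxy
    · rcases h with rfl | rfl
      · exact Or.inl ⟨0, Nat.pos_of_neZero _, by simp [waleckiPath, zigzag]⟩
      · exact Or.inr Sym2.eq_swap
    · rcases h with rfl | rfl
      · exact Or.inl ⟨0, Nat.pos_of_neZero _, by simp [waleckiPath, zigzag, Sym2.eq_swap]⟩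
      · exact Or.inr rfl
    · have hab : a - c ≠ b - c := fun h => hxy (by simpa using h)
      obtain ⟨s, hs, he⟩ := exists_zigzag_edge hab (by
        rcases h with h | h
        exacts [Or.inl (by linear_combination h), Or.inr (by linear_combination h)])
      refine Or.inl ⟨s + 1, hs, ?_⟩
      simpa [waleckiPath] using congrArg (Sym2.map fun z => some (c + z)) he

theorem existsUnique_isWaleckiEdge {x y : Option (ZMod (2 * k))} (hxy : x ≠ y) :
    ∃! i : Fin k, IsWaleckiEdge k ((i : ℕ) : ZMod (2 * k)) x y := by
  rcases x with _ | a <;> rcases y with _ | b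
  · exact absurd rfl hxy
  · exact ZMod.existsUnique_eq_or_eq_add b
  · exact ZMod.existsUnique_eq_or_eq_add a
  · exact ZMod.existsUnique_eq_two_mul_or_eq_two_mul_add_one (a + b)

theorem existsUnique_mem_cyclicEdges_waleckiCycle {x y : Option (ZMod (2 * k))} (hxy : x ≠ y) :
    ∃! i : Fin k, s(x, y) ∈ cyclicEdges (waleckiCycle k ((i : ℕ) : ZMod (2 * k))) := by
  simpa only [mem_cyclicEdges_waleckiCycle_iff _ hxy] using existsUnique_isWaleckiEdge hxy

end Walecki

/-- For every odd `n ≥ 3`, the edge set of `K_n` can be partitioned into `(n-1)/2`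
Hamiltonian cycles. -/
theorem complete_graph_hamiltonian_cycle_decomposition (n : ℕ) (hn : 3 ≤ n) (ho : Odd n) :
    ∃ C : Fin ((n - 1) / 2) → (⊤ : SimpleGraph (Fin n)).Subgraph,
      (∀ i, IsHamiltonianCycleSubgraph (C i)) ∧
      (∀ e ∈ (⊤ : SimpleGraph (Fin n)).edgeSet, ∃! i, e ∈ (C i).edgeSet) := by
  obtain ⟨k, rfl⟩ := ho
  rw [show (2 * k + 1 - 1) / 2 = k by omega]
  have : NeZero k := ⟨by omega⟩
  have : Fact (1 < 2 * k + 1) := ⟨by omega⟩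
  let e : Option (ZMod (2 * k)) ≃ Fin (2 * k + 1) := Fintype.equivFinOfCardEq (by simp)
  refine ⟨fun i => cycleSubgraph ((waleckiCycleEquiv k ((i : ℕ) : ZMod (2 * k))).trans e),
    fun i => isHamiltonianCycleSubgraph_cycleSubgraph _, ?_⟩
  intro d hd
  induction d using Sym2.ind with | _ u v => ?_
  obtain ⟨x, rfl⟩ := e.surjective u
  obtain ⟨y, rfl⟩ := e.surjective v
  have hxy : x ≠ y := fun h => hd (by rw [h])
  simp only [edgeSet_cycleSubgraph, Equiv.coe_trans, mem_cyclicEdges_comp e.injective]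
  exact existsUnique_mem_cyclicEdges_waleckiCycle hxy
end

section
/- Let H be a graph on n vertices with girth at least 5 and minimum degree at least ℓ(k−1)+k, where k ≥ 3 and ℓ ≥ 1. Color the edges of H red and the edges of its complement (in K_n) blue. Then for every set S of k vertices there exist ℓ internally disjoint paths, each containing all of S, in which consecutive edges alternate between red and blue (hence each path is properly colored). -/
open SimpleGraph

/-- `T` is an `S`-tree in `G`: a subtree of `G` containing all vertices of `S`. -/
def IsSTree {V : Type*} (G : SimpleGraph V) (S : Set V) (T : G.Subgraph) : Prop :=
  T.coe.IsTree ∧ S ⊆ T.verts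

/-- A family of subgraphs is internally disjoint with respect to `S`:
pairwise edge-disjoint, and pairwise vertex intersection exactly `S`. -/
def InternallyDisjoint {V ι : Type*} {G : SimpleGraph V} (S : Set V)
    (T : ι → G.Subgraph) : Prop :=
  ∀ i j, i ≠ j → (T i).edgeSet ∩ (T j).edgeSet = ∅ ∧ (T i).verts ∩ (T j).verts = S

/-- No two adjacent edges of the subgraph `T` receive the same color under `c`. -/
def ProperSubgraph {V α : Type*} {G : SimpleGraph V} (c : Sym2 V → α) (T : G.Subgraph) : Prop :=
  ∀ u v w, T.Adj u v → T.Adj u w → v ≠ w → c s(u, v) ≠ c s(u, w)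

/-- `c` is a `(k,ℓ)`-proper coloring of `G`: every `k`-subset `S` of vertices is connected by
`ℓ` internally disjoint proper `S`-trees. -/
def IsProperColoring {V α : Type*} (G : SimpleGraph V) (k ℓ : ℕ) (c : Sym2 V → α) : Prop :=
  ∀ S : Finset V, S.card = k →
    ∃ T : Fin ℓ → G.Subgraph,
      (∀ i, IsSTree G (S : Set V) (T i) ∧ ProperSubgraph c (T i)) ∧
      InternallyDisjoint (S : Set V) T

/-- The `(k,ℓ)`-proper index of `G` is at most `m`. -/
def pxLE {V : Type*} (G : SimpleGraph V) (k ℓ m : ℕ) : Prop :=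
  ∃ c : Sym2 V → Fin m, IsProperColoring G k ℓ c

/-- The `(k,ℓ)`-proper index of `G` equals `2`. -/
def pxEq2 {V : Type*} (G : SimpleGraph V) (k ℓ : ℕ) : Prop :=
  pxLE G k ℓ 2 ∧ ¬ pxLE G k ℓ 1

/-!
Write `S = {v₀, …, v_K}` with `K = k - 1`. For the `i`-th path choose vertices `x i j ∉ S`
(`j < K`), all distinct, such that `x i j` is a red neighbour of `v_j` but not of `v_{j+1}`; then
`v₀, x i 0, v₁, x i 1, …, v_K` is a path whose edges are alternately red and blue, and paths for
different `i` meet exactly in `S`, while each of their edges contains a vertex `x i j` private to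
its path. The choices exist by the easy case of Hall's theorem: `v_j` has at least `ℓK + K + 1`
red neighbours, at most `K` of them lie in `S` and, by girth `5`, at most one is also a red
neighbour of `v_{j+1}`, which leaves at least `ℓK` candidates for each of the `ℓK` choices.
-/

open Function Set

namespace SimpleGraph

variable {V : Type*} {G : SimpleGraph V}

theorem pathGraph_isAcyclic (n : ℕ) : (pathGraph n).IsAcyclic := by
  -- a walk from `a` to `a + 1` has to leave `{c | c ≤ a}`, and only `s(a, a + 1)` does so
  have mem_edges : ∀ {a b : Fin n} (p : (pathGraph n).Walk a b), a.val + 1 = b.val →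
      s(a, b) ∈ p.edges := by
    intro a b p hab
    obtain ⟨d, hd, hda, hdb⟩ := p.exists_boundary_dart {c | c.val ≤ a.val} (le_refl a.val)
      (by simp only [mem_ofPred_eq]; omega)
    have hd' := pathGraph_adj.1 d.adj
    simp only [mem_ofPred_eq, not_le] at hda hdb
    have hfst : d.fst = a := by ext; omega
    have hsnd : d.snd = b := by ext; omega
    have hedge : d.edge = s(a, b) := by rw [Dart.edge, ← hfst, ← hsnd]
    exact hedge ▸ p.edges_eq_map_darts ▸ List.mem_map_of_mem hd
  rw [isAcyclic_iff_forall_adj_isBridge]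
  intro u w huw
  rw [isBridge_iff_forall_walk_mem_edges]
  intro p
  rcases pathGraph_adj.1 huw with h | h
  · exact mem_edges p h
  · simpa [Sym2.eq_swap] using mem_edges p.reverse h

theorem Walk.IsPath.isTree_toSubgraph {u w : V} {p : G.Walk u w} (hp : p.IsPath) :
    p.toSubgraph.coe.IsTree := by
  classical
  exact hp.pathGraphIsoToSubgraph.isTree_iff.1 ⟨pathGraph_connected _, pathGraph_isAcyclic _⟩

theorem Walk.exists_isPath_getVert_eq {f : ℕ → V} {m : ℕ}
    (hadj : ∀ t < m, G.Adj (f t) (f (t + 1))) (hinj : InjOn f (Iic m)) :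
    ∃ p : G.Walk (f 0) (f m), p.IsPath ∧ p.length = m ∧ ∀ t ≤ m, p.getVert t = f t := by
  suffices h : ∃ p : G.Walk (f 0) (f m), p.length = m ∧ ∀ t ≤ m, p.getVert t = f t by
    obtain ⟨p, hlen, hget⟩ := h
    refine ⟨p, (IsPath.getVert_injOn_iff p).1 ?_, hlen, hget⟩
    intro s hs t ht hst
    simp only [mem_ofPred_eq, hlen] at hs ht
    exact hinj (mem_Iic.2 hs) (mem_Iic.2 ht) (by rwa [← hget s hs, ← hget t ht])
  clear hinj
  induction m generalizing f with
  | zero => exact ⟨nil, rfl, fun t ht => by simp [Nat.le_zero.1 ht]⟩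
  | succ m ih =>
    obtain ⟨q, hlen, hget⟩ := ih (f := fun t => f (t + 1)) fun t ht => hadj (t + 1) (by omega)
    refine ⟨cons (hadj 0 (by omega)) q, by simp [hlen], fun t ht => ?_⟩
    cases t with
    | zero => rfl
    | succ t => exact hget t (by omega)

theorem Walk.IsPath.properSubgraph_toSubgraph {α : Type*} {c : Sym2 V → α} {u w : V}
    {p : G.Walk u w} (hp : p.IsPath)
    (halt : ∀ t, t + 1 < p.length →
      c s(p.getVert t, p.getVert (t + 1)) ≠ c s(p.getVert (t + 1), p.getVert (t + 2))) :
    ProperSubgraph c p.toSubgraph := by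
  intro a b₁ b₂ h₁ h₂ hne
  have hnil : ¬ p.Nil := by
    obtain ⟨t, -, ht⟩ := p.toSubgraph_adj_iff.1 h₁
    exact not_nil_iff_lt_length.2 (by omega)
  obtain ⟨j, rfl, hj⟩ := mem_support_iff_exists_getVert.1 (p.mem_support_of_adj_toSubgraph h₁)
  have hb₁ : b₁ ∈ p.toSubgraph.neighborSet (p.getVert j) := h₁
  have hb₂ : b₂ ∈ p.toSubgraph.neighborSet (p.getVert j) := h₂
  rcases Nat.eq_zero_or_pos j with rfl | hj0
  · rw [getVert_zero, hp.neighborSet_toSubgraph_startpoint hnil] at hb₁ hb₂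
    exact absurd (hb₁.trans hb₂.symm) hne
  rcases hj.eq_or_lt with rfl | hjlen
  · rw [getVert_length, hp.neighborSet_toSubgraph_endpoint hnil] at hb₁ hb₂
    exact absurd (hb₁.trans hb₂.symm) hne
  have hturn := halt (j - 1) (by omega)
  rw [show j - 1 + 1 = j by omega, show j - 1 + 2 = j + 1 by omega, Sym2.eq_swap] at hturn
  rw [hp.neighborSet_toSubgraph_internal hj0.ne' hjlen] at hb₁ hb₂
  rcases hb₁ with rfl | rfl <;> rcases hb₂ with rfl | rfl
  · exact absurd rfl hne
  · exact hturn
  · exact hturn.symm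
  · exact absurd rfl hne

theorem neighborSet_inter_subsingleton_of_five_le_egirth (hg : 5 ≤ G.egirth) {a b : V}
    (hab : a ≠ b) : (G.neighborSet a ∩ G.neighborSet b).Subsingleton := by
  rintro x ⟨hax, hbx⟩ y ⟨hay, hby⟩
  rw [mem_neighborSet] at hax hbx hay hby
  by_contra hxy
  let c : G.Walk a a := .cons hax <| .cons hbx.symm <| .cons hby <| .cons hay.symm .nil
  have hc : c.IsCycle := by
    have := hax.ne; have := hbx.ne; have := hay.ne; have := hby.ne
    refine (Walk.isCycle_def _).2 ⟨?_, by simp [c], ?_⟩ <;>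
      simp [c, Walk.isTrail_def, *, Ne.symm, eq_comm]
  have := hg.trans (egirth_le_length hc)
  norm_num [c] at this

theorem ncard_neighborSet_le_ncard_diff_add [Finite V] (hg : 5 ≤ G.egirth) {S : Set V} {a b : V}
    (ha : a ∈ S) (hab : a ≠ b) :
    (G.neighborSet a).ncard ≤ ((G.neighborSet a \ S) \ G.neighborSet b).ncard + S.ncard := by
  set A := (G.neighborSet a \ S) \ G.neighborSet b
  set C := G.neighborSet a ∩ G.neighborSet b
  have hcover : G.neighborSet a ⊆ A ∪ (S \ {a}) ∪ C := by
    intro y hy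
    by_cases hyS : y ∈ S
    · exact Or.inl (Or.inr ⟨hyS, fun h => G.ne_of_adj hy (Eq.symm h)⟩)
    by_cases hyb : y ∈ G.neighborSet b
    · exact Or.inr ⟨hy, hyb⟩
    · exact Or.inl (Or.inl ⟨⟨hy, hyS⟩, hyb⟩)
  have hS : (S \ {a}).ncard + 1 = S.ncard := ncard_sdiff_singleton_add_one ha
  have hC : C.ncard ≤ 1 :=
    ncard_le_one_iff_subsingleton.2 (neighborSet_inter_subsingleton_of_five_le_egirth hg hab)
  calc (G.neighborSet a).ncard ≤ (A ∪ (S \ {a}) ∪ C).ncard := ncard_le_ncard hcover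
    _ ≤ A.ncard + (S \ {a}).ncard + C.ncard :=
        (ncard_union_le _ _).trans (Nat.add_le_add_right (ncard_union_le _ _) _)
    _ ≤ A.ncard + S.ncard := by omega

end SimpleGraph

theorem exists_injective_forall_mem_of_card_le_ncard {ι α : Type*} [Fintype ι] [Finite α]
    (t : ι → Set α) (ht : ∀ i, Fintype.card ι ≤ (t i).ncard) :
    ∃ f : ι → α, Injective f ∧ ∀ i, f i ∈ t i := by
  classical
  have := Fintype.ofFinite α
  simpa using (Finset.all_card_le_biUnion_card_iff_exists_injective fun i => (t i).toFinset).1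
    fun s => by
      rcases s.eq_empty_or_nonempty with rfl | ⟨i, hi⟩
      · simp
      calc s.card ≤ Fintype.card ι := s.card_le_univ
        _ ≤ (t i).toFinset.card := by rw [← ncard_eq_toFinset_card']; exact ht i
        _ ≤ (s.biUnion fun i => (t i).toFinset).card :=
          Finset.card_le_card (Finset.subset_biUnion_of_mem (fun i => (t i).toFinset) hi)

def interleave {V : Type*} (v x : ℕ → V) (t : ℕ) : V :=
  if Even t then v (t / 2) else x (t / 2)

section Interleave

variable {V : Type*} {v x : ℕ → V} {K : ℕ}

@[simp]
theorem interleave_two_mul (j : ℕ) : interleave v x (2 * j) = v j := by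
  simp [interleave]

@[simp]
theorem interleave_two_mul_add_one (j : ℕ) : interleave v x (2 * j + 1) = x j := by
  simp [interleave, Nat.add_div_of_dvd_right]

theorem interleave_two_mul_add_two (j : ℕ) : interleave v x (2 * j + 1 + 1) = v (j + 1) := by
  rw [show 2 * j + 1 + 1 = 2 * (j + 1) by ring, interleave_two_mul]

theorem image_interleave_Iic :
    interleave v x '' Iic (2 * K) = v '' Iic K ∪ x '' Iio K := by
  ext y
  constructor
  · rintro ⟨t, ht, rfl⟩
    obtain ⟨j, rfl | rfl⟩ := Nat.even_or_odd' t
    · exact Or.inl ⟨j, by simp only [mem_Iic] at ht ⊢; omega, by simp⟩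
    · exact Or.inr ⟨j, by simp only [mem_Iic, mem_Iio] at ht ⊢; omega, by simp⟩
  · rintro (⟨j, hj, rfl⟩ | ⟨j, hj, rfl⟩)
    · exact ⟨2 * j, by simp only [mem_Iic] at hj ⊢; omega, by simp⟩
    · exact ⟨2 * j + 1, by simp only [mem_Iio, mem_Iic] at hj ⊢; omega, by simp⟩

theorem injOn_interleave (hv : InjOn v (Iic K)) (hx : InjOn x (Iio K))
    (hvx : ∀ j ≤ K, ∀ j' < K, v j ≠ x j') : InjOn (interleave v x) (Iic (2 * K)) := by
  intro s hs t ht hst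
  simp only [mem_Iic] at hs ht
  obtain ⟨i, rfl | rfl⟩ := Nat.even_or_odd' s <;> obtain ⟨j, rfl | rfl⟩ := Nat.even_or_odd' t <;>
    simp only [interleave_two_mul, interleave_two_mul_add_one] at hst
  · rw [hv (mem_Iic.2 (by omega)) (mem_Iic.2 (by omega)) hst]
  · exact absurd hst (hvx i (by omega) j (by omega))
  · exact absurd hst.symm (hvx j (by omega) i (by omega))
  · rw [hx (mem_Iio.2 (by omega)) (mem_Iio.2 (by omega)) hst]

theorem interleave_mem_or_interleave_add_one_mem {t : ℕ} (ht : t < 2 * K) :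
    interleave v x t ∈ x '' Iio K ∨ interleave v x (t + 1) ∈ x '' Iio K := by
  obtain ⟨j, rfl | rfl⟩ := Nat.even_or_odd' t
  · exact Or.inr ⟨j, mem_Iio.2 (by omega), by simp⟩
  · exact Or.inl ⟨j, mem_Iio.2 (by omega), by simp⟩

theorem color_interleave {α : Type*} {c : Sym2 V → α} {red blue : α}
    (hred : ∀ j < K, c s(v j, x j) = red) (hblue : ∀ j < K, c s(x j, v (j + 1)) = blue)
    {t : ℕ} (ht : t < 2 * K) :
    c s(interleave v x t, interleave v x (t + 1)) = if Even t then red else blue := by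
  obtain ⟨j, rfl | rfl⟩ := Nat.even_or_odd' t
  · simp [hred j (by omega)]
  · simp [interleave_two_mul_add_two, hblue j (by omega), Nat.not_even_bit1]

end Interleave

theorem Finset.exists_injOn_image_Iic_eq {α : Type*} {s : Finset α} {K : ℕ} (hs : s.card = K + 1) :
    ∃ v : ℕ → α, InjOn v (Set.Iic K) ∧ v '' Set.Iic K = s := by
  let e := s.equivFinOfCardEq hs
  refine ⟨fun t => e.symm (Fin.ofNat (K + 1) t), ?_, ?_⟩
  · intro a ha b hb h
    have := congrArg Fin.val (e.symm.injective (Subtype.ext h))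
    simp only [Fin.val_ofNat] at this
    rwa [Nat.mod_eq_of_lt (Nat.lt_succ_of_le ha), Nat.mod_eq_of_lt (Nat.lt_succ_of_le hb)] at this
  · ext a
    constructor
    · rintro ⟨t, -, rfl⟩
      exact (e.symm _).2
    · intro ha
      exact ⟨e ⟨a, ha⟩, Nat.lt_succ_iff.1 (e ⟨a, ha⟩).2, by simp⟩

theorem internallyDisjoint_of_verts_eq_union {V ι : Type*} {G : SimpleGraph V} {S : Set V}
    {T : ι → G.Subgraph} (X : ι → Set V) (hverts : ∀ i, (T i).verts = S ∪ X i)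
    (hXS : ∀ i, Disjoint (X i) S) (hX : Pairwise (Disjoint on X))
    (hedge : ∀ i u w, (T i).Adj u w → u ∈ X i ∨ w ∈ X i) : InternallyDisjoint S T := by
  have hprivate : ∀ {i j}, i ≠ j → ∀ y ∈ X i, y ∉ (T j).verts := by
    intro i j hij y hyi hyj
    rw [hverts] at hyj
    rcases hyj with hyS | hyj
    · exact disjoint_left.1 (hXS i) hyi hyS
    · exact disjoint_left.1 (hX hij) hyi hyj
  intro i j hij
  constructor
  · rw [eq_empty_iff_forall_notMem]
    refine Sym2.ind fun u w ⟨hei, hej⟩ => ?_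
    rcases hedge i u w hei with hu | hw
    · exact hprivate hij u hu ((T j).edge_vert hej)
    · exact hprivate hij w hw ((T j).edge_vert hej.symm)
  · rw [hverts, hverts, ← union_inter_distrib_left, (hX hij).inter_eq, union_empty]

theorem exists_interleaving_neighbors {V : Type*} [Finite V] {H : SimpleGraph V} (hg : 5 ≤ H.egirth)
    {S : Set V} {K ℓ : ℕ} {v : ℕ → V} (hvS : ∀ j ≤ K, v j ∈ S) (hv : ∀ j < K, v j ≠ v (j + 1))
    (hδ : ∀ w, ℓ * K + S.ncard ≤ (H.neighborSet w).ncard) :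
    ∃ x : Fin ℓ → ℕ → V, (∀ i i' j j', j < K → j' < K → x i j = x i' j' → i = i' ∧ j = j') ∧
      ∀ i, ∀ j < K, H.Adj (v j) (x i j) ∧ x i j ∉ S ∧ ¬ H.Adj (x i j) (v (j + 1)) := by
  obtain ⟨y, hy_inj, hy⟩ := exists_injective_forall_mem_of_card_le_ncard
    (fun p : Fin ℓ × Fin K => (H.neighborSet (v p.2) \ S) \ H.neighborSet (v (p.2 + 1)))
    fun p => by
      have := ncard_neighborSet_le_ncard_diff_add hg (hvS p.2 p.2.is_lt.le) (hv p.2 p.2.is_lt)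
      have := hδ (v p.2)
      simp only [Fintype.card_prod, Fintype.card_fin]
      omega
  refine ⟨fun i j => if hj : j < K then y (i, ⟨j, hj⟩) else v 0, ?_, ?_⟩
  · intro i i' j j' hj hj' h
    simp only [hj, hj', dif_pos] at h
    simpa [Prod.ext_iff, Fin.ext_iff] using hy_inj h
  · intro i j hj
    simp only [hj, dif_pos]
    obtain ⟨⟨hvy, hyS⟩, hyv⟩ := hy (i, ⟨j, hj⟩)
    exact ⟨hvy, hyS, fun h => hyv h.symm⟩

theorem exists_proper_path_interleave {V α : Type*} {v x : ℕ → V} {K : ℕ} {c : Sym2 V → α}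
    {red blue : α} (hrb : red ≠ blue) (hinj : InjOn (interleave v x) (Iic (2 * K)))
    (hred : ∀ j < K, c s(v j, x j) = red) (hblue : ∀ j < K, c s(x j, v (j + 1)) = blue) :
    ∃ T : (⊤ : SimpleGraph V).Subgraph, T.coe.IsTree ∧ ProperSubgraph c T ∧
      T.verts = v '' Iic K ∪ x '' Iio K ∧ ∀ u w, T.Adj u w → u ∈ x '' Iio K ∨ w ∈ x '' Iio K := by
  have hadj : ∀ t < 2 * K, (⊤ : SimpleGraph V).Adj (interleave v x t) (interleave v x (t + 1)) :=
    fun t ht h => by have := hinj (mem_Iic.2 ht.le) (mem_Iic.2 ht) h; omega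
  obtain ⟨p, hp, hlen, hget⟩ := SimpleGraph.Walk.exists_isPath_getVert_eq hadj hinj
  refine ⟨p.toSubgraph, hp.isTree_toSubgraph, hp.properSubgraph_toSubgraph fun t ht => ?_, ?_,
    fun u w h => ?_⟩
  · rw [hlen] at ht
    rw [hget t (by omega), hget (t + 1) (by omega), hget (t + 2) ht,
      color_interleave hred hblue (by omega : t < 2 * K), color_interleave hred hblue ht]
    by_cases h : Even t <;> simp [h, Nat.even_add_one, hrb, hrb.symm]
  · ext y
    rw [← image_interleave_Iic, SimpleGraph.Walk.mem_verts_toSubgraph,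
      SimpleGraph.Walk.mem_support_iff_exists_getVert, hlen]
    constructor
    · rintro ⟨t, rfl, ht⟩
      exact ⟨t, ht, (hget t ht).symm⟩
    · rintro ⟨t, ht, rfl⟩
      exact ⟨t, hget t ht, ht⟩
  · obtain ⟨t, he, ht⟩ := p.toSubgraph_adj_iff.1 h
    rw [hlen] at ht
    rw [hget t ht.le, hget (t + 1) ht] at he
    have := interleave_mem_or_interleave_add_one_mem (v := v) (x := x) ht
    rcases Sym2.eq_iff.1 he with ⟨rfl, rfl⟩ | ⟨rfl, rfl⟩ <;> tauto

theorem exists_internallyDisjoint_proper_interleave_paths {V ι α : Type*} {S : Set V} {K : ℕ}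
    {v : ℕ → V} {x : ι → ℕ → V} {c : Sym2 V → α} {red blue : α} (hrb : red ≠ blue)
    (hv : InjOn v (Iic K)) (hvS : v '' Iic K = S)
    (hx : ∀ i i' j j', j < K → j' < K → x i j = x i' j' → i = i' ∧ j = j')
    (hxS : ∀ i, ∀ j < K, x i j ∉ S) (hred : ∀ i, ∀ j < K, c s(v j, x i j) = red)
    (hblue : ∀ i, ∀ j < K, c s(x i j, v (j + 1)) = blue) :
    ∃ T : ι → (⊤ : SimpleGraph V).Subgraph,
      (∀ i, IsSTree ⊤ S (T i) ∧ ProperSubgraph c (T i)) ∧ InternallyDisjoint S T := by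
  have hinj : ∀ i, InjOn (interleave v (x i)) (Iic (2 * K)) := fun i =>
    injOn_interleave hv (fun j hj j' hj' h => (hx i i j j' hj hj' h).2)
      (fun j hj j' hj' h => hxS i j' hj' (hvS ▸ h ▸ mem_image_of_mem v (mem_Iic.2 hj)))
  choose T hT hproper hverts hedge using fun i =>
    exists_proper_path_interleave hrb (hinj i) (hred i) (hblue i)
  rw [hvS] at hverts
  refine ⟨T, fun i => ⟨⟨hT i, hverts i ▸ subset_union_left⟩, hproper i⟩,
    internallyDisjoint_of_verts_eq_union _ hverts (fun i => disjoint_left.2 ?_)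
      (fun i i' hii' => disjoint_left.2 ?_) hedge⟩
  · rintro _ ⟨j, hj, rfl⟩
    exact hxS i j hj
  · rintro _ ⟨j, hj, rfl⟩ ⟨j', hj', h⟩
    exact hii' (hx i' i j' j hj' hj h).1.symm

open scoped Classical in
theorem girth_five_coloring_proper_trees_general (n k ℓ : ℕ) (hk : 3 ≤ k)
    (H : SimpleGraph (Fin n)) (hg : (5 : ℕ∞) ≤ H.egirth)
    (hδ : ∀ v, ℓ * (k - 1) + k ≤ (H.neighborSet v).ncard)
    (S : Finset (Fin n)) (hS : S.card = k) :
    ∃ T : Fin ℓ → (⊤ : SimpleGraph (Fin n)).Subgraph,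
      (∀ i, IsSTree (⊤ : SimpleGraph (Fin n)) (S : Set (Fin n)) (T i) ∧
        ProperSubgraph (fun e => if e ∈ H.edgeSet then (0 : Fin 2) else 1) (T i)) ∧
      InternallyDisjoint (S : Set (Fin n)) T := by
  obtain ⟨K, rfl⟩ : ∃ K, k = K + 1 := ⟨k - 1, by omega⟩
  obtain ⟨v, hv, hvS⟩ := S.exists_injOn_image_Iic_eq hS
  obtain ⟨x, hx, hxv⟩ := exists_interleaving_neighbors hg
    (fun j hj => hvS ▸ mem_image_of_mem v (mem_Iic.2 hj))
    (fun j hj h => by have := hv (mem_Iic.2 hj.le) (mem_Iic.2 hj) h; omega)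
    (by simpa [hS] using hδ)
  exact exists_internallyDisjoint_proper_interleave_paths zero_ne_one hv hvS hx
    (fun i j hj => (hxv i j hj).2.1) (fun i j hj => if_pos (hxv i j hj).1)
    (fun i j hj => if_neg (hxv i j hj).2.2)

open scoped Classical in
/-- Let `H` be a graph on `n` vertices with girth at least `5` and minimum degree at least
`ℓ(k−1)+k`. Color the edges of `H` red (color `0`) and the remaining edges of `K_n` blue
(color `1`). Then every `k`-set `S` of vertices is connected by `ℓ` internally disjoint
properly colored `S`-trees (which, having two colors, are alternating paths). -/
theorem girth_five_coloring_proper_trees (n k ℓ : ℕ) (hk : 3 ≤ k) (hl : 1 ≤ ℓ)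
    (H : SimpleGraph (Fin n)) (hg : (5 : ℕ∞) ≤ H.egirth)
    (hδ : ∀ v, ℓ * (k - 1) + k ≤ (H.neighborSet v).ncard)
    (S : Finset (Fin n)) (hS : S.card = k) :
    ∃ T : Fin ℓ → (⊤ : SimpleGraph (Fin n)).Subgraph,
      (∀ i, IsSTree (⊤ : SimpleGraph (Fin n)) (S : Set (Fin n)) (T i) ∧
        ProperSubgraph (fun e => if e ∈ H.edgeSet then (0 : Fin 2) else 1) (T i)) ∧
      InternallyDisjoint (S : Set (Fin n)) T :=
  girth_five_coloring_proper_trees_general n k ℓ hk H hg hδ S hS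
end
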